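/- Let C_1,…,C_k be a partition of [1:p] making the groups A_j := X_{C_j} mutually independent, and let Y = ∑_{w⊆[1:k]} g_w(A_w) be the Hoeffding decomposition of Y. Then for every u ⊆ [1:p], the Sobol index of Y satisfies S_u = ∑_{w⊆[1:k], u⊆C_w} S_w^g · S_u^{g,w}; equivalently, ∑_{v⊆u} (−1)^{|u|−|v|} Var(E(Y|X_v)) = ∑_{w⊆[1:k] with u⊆C_w} ∑_{v⊆u} (−1)^{|u|−|v|} Var(E(g_w(A_w)|X_v)). (Proposition 2) -/

import Mathlib

/-!
Write `σ_v` for the σ-algebra generated by `X_v` and `C_w` for `⋃_{j ∈ w} C_j`. Since `g_w`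
depends only on the groups in `w`, and these are independent of the coordinates outside `C_w`,
`E(g_w | σ_v) = E(g_w | σ_{v ∩ C_w})` (a π-λ argument on the sets `a ∩ b`,
`a ∈ σ_{v ∩ C_w}`, `b ∈ σ_{v \ C_w}`). Together with `E(g_w | σ_{C_{w'}}) = 0` for `w ⊄ w'`
this makes the terms `E(g_w | σ_v)` of `E(Y | σ_v)` pairwise uncorrelated, so
`V_v = ∑_w V_v^{g,w}`. Finally, if `u ⊄ C_w`, pick `i ∈ u \ C_w`: `V_v^{g,w}` does not change
when `i` is added to `v`, so the alternating sum over `v ⊆ u` cancels in pairs.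
-/

open MeasureTheory ProbabilityTheory

section Generic

variable {Ω E : Type*} {m₀ : MeasurableSpace Ω} {μ : Measure Ω}
  [NormedAddCommGroup E] [NormedSpace ℝ E]

theorem MeasurableSpace.sup_eq_generateFrom_image2_inter (m₁ m₂ : MeasurableSpace Ω) :
    m₁ ⊔ m₂ = generateFrom
      (Set.image2 (· ∩ ·) {s | MeasurableSet[m₁] s} {t | MeasurableSet[m₂] t}) := by
  refine le_antisymm (sup_le (fun s hs => ?_) (fun t ht => ?_)) (generateFrom_le ?_)
  · exact measurableSet_generateFrom ⟨s, hs, Set.univ, .univ, Set.inter_univ s⟩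
  · exact measurableSet_generateFrom ⟨Set.univ, .univ, t, ht, Set.univ_inter t⟩
  · rintro _ ⟨s, hs, t, ht, rfl⟩
    exact (le_sup_left (b := m₂) _ hs).inter (le_sup_right (a := m₁) _ ht)

theorem MeasurableSpace.isPiSystem_image2_inter (m₁ m₂ : MeasurableSpace Ω) :
    IsPiSystem (Set.image2 (· ∩ ·) {s | MeasurableSet[m₁] s} {t | MeasurableSet[m₂] t}) := by
  rintro _ ⟨s, hs, t, ht, rfl⟩ _ ⟨s', hs', t', ht', rfl⟩ _
  exact ⟨s ∩ s', hs.inter hs', t ∩ t', ht.inter ht', (Set.inter_inter_inter_comm s t s' t').symm⟩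

theorem setIntegral_eq_of_isPiSystem {m : MeasurableSpace Ω} (hm : m ≤ m₀) {S : Set (Set Ω)}
    (hgen : m = MeasurableSpace.generateFrom S) (hS : IsPiSystem S) {f g : Ω → E}
    (hf : Integrable f μ) (hg : Integrable g μ) (h_univ : ∫ x, f x ∂μ = ∫ x, g x ∂μ)
    (h_eq : ∀ s ∈ S, ∫ x in s, f x ∂μ = ∫ x in s, g x ∂μ) {s : Set Ω} (hs : MeasurableSet[m] s) :
    ∫ x in s, f x ∂μ = ∫ x in s, g x ∂μ := by
  induction s, hs using MeasurableSpace.induction_on_inter hgen hS with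
  | empty => simp
  | basic t ht => exact h_eq t ht
  | compl t ht iht =>
    rw [setIntegral_compl (hm t ht) hf, setIntegral_compl (hm t ht) hg, iht, h_univ]
  | iUnion t hdisj ht iht =>
    refine (hasSum_integral_iUnion (fun n => hm _ (ht n)) hdisj hf.integrableOn).unique ?_
    simpa only [iht] using hasSum_integral_iUnion (fun n => hm _ (ht n)) hdisj hg.integrableOn

variable [CompleteSpace E] [IsFiniteMeasure μ] {m₁ m₂ : MeasurableSpace Ω} {f : Ω → E}

theorem setIntegral_inter_eq_measureReal_smul_of_indep (h₁ : m₁ ≤ m₀) (h₂ : m₂ ≤ m₀)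
    (hind : Indep m₁ m₂ μ) (hf : StronglyMeasurable[m₁] f) (hfi : Integrable f μ)
    {s t : Set Ω} (hs : MeasurableSet[m₁] s) (ht : MeasurableSet[m₂] t) :
    ∫ x in s ∩ t, f x ∂μ = μ.real t • ∫ x in s, f x ∂μ := by
  have hsf : Integrable (s.indicator f) μ := hfi.indicator (h₁ s hs)
  rw [Set.inter_comm, ← setIntegral_indicator (h₁ s hs), ← setIntegral_condExp h₂ hsf ht,
    setIntegral_congr_ae (h₂ t ht)
      ((condExp_indep_eq h₁ h₂ (hf.indicator hs) hind).mono fun _ hx _ => hx),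
    setIntegral_const, integral_indicator (h₁ s hs)]

theorem condExp_sup_ae_eq_of_indep {ma mb : MeasurableSpace Ω} (hma : ma ≤ m₁) (h₁ : m₁ ≤ m₀)
    (hb : mb ≤ m₀) (hind : Indep m₁ mb μ) (hf : StronglyMeasurable[m₁] f) (hfi : Integrable f μ) :
    μ[f | ma ⊔ mb] =ᵐ[μ] μ[f | ma] := by
  have hma₀ : ma ≤ m₀ := hma.trans h₁
  refine (ae_eq_condExp_of_forall_setIntegral_eq (sup_le hma₀ hb) hfi
    (fun _ _ _ => integrable_condExp.integrableOn) (fun s hs _ => ?_)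
    (stronglyMeasurable_condExp.aestronglyMeasurable.mono le_sup_left)).symm
  refine setIntegral_eq_of_isPiSystem (sup_le hma₀ hb)
    (MeasurableSpace.sup_eq_generateFrom_image2_inter ma mb)
    (MeasurableSpace.isPiSystem_image2_inter ma mb) integrable_condExp hfi
    (integral_condExp hma₀) ?_ hs
  rintro _ ⟨a, ha, b, hb', rfl⟩
  rw [setIntegral_inter_eq_measureReal_smul_of_indep h₁ hb hind
      (stronglyMeasurable_condExp.mono hma) integrable_condExp (hma a ha) hb',
    setIntegral_inter_eq_measureReal_smul_of_indep h₁ hb hind hf hfi (hma a ha) hb',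
    setIntegral_condExp hma₀ hfi ha]

theorem integral_condExp_mul_of_stronglyMeasurable {m : MeasurableSpace Ω} (hm : m ≤ m₀)
    {f g : Ω → ℝ} (hg : StronglyMeasurable[m] g) (hf : MemLp f 2 μ) (hg2 : MemLp g 2 μ) :
    ∫ x, μ[f | m] x * g x ∂μ = ∫ x, f x * g x ∂μ := by
  have hfg : Integrable (f * g) μ := hf.integrable_mul hg2
  calc ∫ x, μ[f | m] x * g x ∂μ = ∫ x, μ[f * g | m] x ∂μ :=
        integral_congr_ae (condExp_mul_of_stronglyMeasurable_right hg hfg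
          (hf.integrable one_le_two)).symm
    _ = ∫ x, f x * g x ∂μ := integral_condExp hm

theorem variance_sum_of_pairwise_covariance_eq_zero {ι : Type*} [Fintype ι] {X : ι → Ω → ℝ}
    (hX : ∀ i, MemLp (X i) 2 μ) (hcov : Pairwise fun i j => cov[X i, X j; μ] = 0) :
    Var[∑ i, X i; μ] = ∑ i, Var[X i; μ] := by
  classical
  rw [variance_sum hX]
  refine Finset.sum_congr rfl fun i _ => ?_
  rw [Finset.sum_eq_single i (fun j _ hji => hcov hji.symm) (by simp),
    covariance_self (hX i).aemeasurable]

end Generic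

theorem Finset.sum_powerset_neg_one_pow_card_sub_mul_eq_zero {α R : Type*} [DecidableEq α]
    [CommRing R] {u : Finset α} {i : α} (hi : i ∈ u) {f : Finset α → R}
    (hf : ∀ v, f (insert i v) = f v) :
    ∑ v ∈ u.powerset, (-1 : R) ^ (u.card - v.card) * f v = 0 := by
  rw [← Finset.insert_erase hi, Finset.sum_powerset_insert (Finset.notMem_erase i u),
    ← Finset.sum_add_distrib]
  refine Finset.sum_eq_zero fun v hv => ?_
  have hiv : i ∉ v := fun h => Finset.notMem_erase i u (Finset.mem_powerset.mp hv h)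
  have hcard : v.card ≤ (u.erase i).card := Finset.card_le_card (Finset.mem_powerset.mp hv)
  rw [hf, Finset.card_insert_of_notMem hiv, Finset.card_insert_of_notMem (Finset.notMem_erase i u),
    Nat.add_sub_add_right, Nat.succ_sub hcard, pow_succ]
  ring

section Coordinates

variable {Ω ι κ : Type*} {m₀ : MeasurableSpace Ω} {μ : Measure Ω}
  {E : ι → Type*} [∀ i, MeasurableSpace (E i)] {X : ∀ i, Ω → E i}

abbrev sigmaOfCoords (X : ∀ i, Ω → E i) (u : Finset ι) : MeasurableSpace Ω :=
  ⨆ i ∈ u, MeasurableSpace.comap (X i) inferInstance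

theorem sigmaOfCoords_le (hX : ∀ i, Measurable (X i)) (u : Finset ι) :
    sigmaOfCoords X u ≤ m₀ :=
  iSup₂_le fun i _ => (hX i).comap_le

theorem sigmaOfCoords_mono : Monotone (sigmaOfCoords X) :=
  fun _ _ h => biSup_mono fun _ hi => h hi

theorem sigmaOfCoords_union [DecidableEq ι] (u v : Finset ι) :
    sigmaOfCoords X (u ∪ v) = sigmaOfCoords X u ⊔ sigmaOfCoords X v :=
  Finset.iSup_union

theorem indep_sigmaOfCoords_biUnion_sdiff [DecidableEq ι] (hX : ∀ i, Measurable (X i))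
    {C : κ → Finset ι} (hcover : ∀ i, ∃ j, i ∈ C j)
    (hindep : iIndep (fun j => sigmaOfCoords X (C j)) μ) (w : Finset κ) (v : Finset ι) :
    Indep (sigmaOfCoords X (w.biUnion C)) (sigmaOfCoords X (v \ w.biUnion C)) μ := by
  have hindep_w := indep_biSup_compl (fun j => sigmaOfCoords_le hX (C j)) hindep (w : Set κ)
  refine indep_of_indep_of_le_left (indep_of_indep_of_le_right hindep_w ?_) ?_
  · refine iSup₂_le fun i hi => ?_
    obtain ⟨j, hij⟩ := hcover i
    have hjw : j ∉ w := fun hjw => (Finset.mem_sdiff.mp hi).2 (Finset.mem_biUnion.mpr ⟨j, hjw, hij⟩)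
    exact le_iSup₂_of_le (f := fun j (_ : j ∈ (w : Set κ)ᶜ) => sigmaOfCoords X (C j)) j hjw
      (le_iSup₂ (f := fun i (_ : i ∈ C j) => MeasurableSpace.comap (X i) inferInstance) i hij)
  · rw [sigmaOfCoords, Finset.iSup_biUnion]
    simp only [Finset.mem_coe, le_refl]

theorem condExp_sigmaOfCoords_ae_eq_inter [DecidableEq ι] [IsFiniteMeasure μ]
    (hX : ∀ i, Measurable (X i)) {s v : Finset ι}
    (hind : Indep (sigmaOfCoords X s) (sigmaOfCoords X (v \ s)) μ) {f : Ω → ℝ}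
    (hf : StronglyMeasurable[sigmaOfCoords X s] f) (hfi : Integrable f μ) :
    μ[f | sigmaOfCoords X v] =ᵐ[μ] μ[f | sigmaOfCoords X (v ∩ s)] := by
  have hsplit : sigmaOfCoords X v = sigmaOfCoords X (v ∩ s) ⊔ sigmaOfCoords X (v \ s) := by
    rw [← sigmaOfCoords_union, ← Finset.sup_eq_union, ← Finset.inf_eq_inter, sup_inf_sdiff]
  rw [hsplit]
  exact condExp_sup_ae_eq_of_indep (sigmaOfCoords_mono Finset.inter_subset_right)
    (sigmaOfCoords_le hX s) (sigmaOfCoords_le hX _) hind hf hfi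

theorem integral_condExp_mul_condExp_eq_zero [DecidableEq ι] [IsFiniteMeasure μ]
    (hX : ∀ i, Measurable (X i)) {s v : Finset ι}
    (hind : Indep (sigmaOfCoords X s) (sigmaOfCoords X (v \ s)) μ) {f g : Ω → ℝ}
    (hf : MemLp f 2 μ) (hf₀ : μ[f | sigmaOfCoords X s] =ᵐ[μ] 0)
    (hg : StronglyMeasurable[sigmaOfCoords X s] g) (hg2 : MemLp g 2 μ) :
    ∫ x, μ[f | sigmaOfCoords X v] x * μ[g | sigmaOfCoords X v] x ∂μ = 0 := by
  set B := μ[g | sigmaOfCoords X (v ∩ s)]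
  have hB : StronglyMeasurable[sigmaOfCoords X (v ∩ s)] B := stronglyMeasurable_condExp
  have hB2 : MemLp B 2 μ := hg2.condExp one_le_two
  calc ∫ x, μ[f | sigmaOfCoords X v] x * μ[g | sigmaOfCoords X v] x ∂μ
      = ∫ x, μ[f | sigmaOfCoords X v] x * B x ∂μ := by
        refine integral_congr_ae ?_
        filter_upwards [condExp_sigmaOfCoords_ae_eq_inter hX hind hg (hg2.integrable one_le_two)]
          with x hx
        rw [hx]
    _ = ∫ x, f x * B x ∂μ := integral_condExp_mul_of_stronglyMeasurable (sigmaOfCoords_le hX v)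
        (hB.mono (sigmaOfCoords_mono Finset.inter_subset_left)) hf hB2
    _ = ∫ x, μ[f | sigmaOfCoords X s] x * B x ∂μ :=
        (integral_condExp_mul_of_stronglyMeasurable (sigmaOfCoords_le hX s)
          (hB.mono (sigmaOfCoords_mono Finset.inter_subset_right)) hf hB2).symm
    _ = 0 := by
        refine (integral_congr_ae ?_).trans (integral_zero Ω ℝ)
        filter_upwards [hf₀] with x hx
        simp [hx]

end Coordinates

section Hoeffding

variable {Ω ι κ : Type*} {m₀ : MeasurableSpace Ω} {μ : Measure Ω} [IsProbabilityMeasure μ]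
  {E : ι → Type*} [∀ i, MeasurableSpace (E i)] {X : ∀ i, Ω → E i} [DecidableEq ι]
  {C : κ → Finset ι} {G : Finset κ → Ω → ℝ}

theorem pairwise_covariance_condExp_hoeffding_eq_zero (hX : ∀ i, Measurable (X i))
    (hcover : ∀ i, ∃ j, i ∈ C j) (hindep : iIndep (fun j => sigmaOfCoords X (C j)) μ)
    (hGmeas : ∀ w, StronglyMeasurable[sigmaOfCoords X (w.biUnion C)] (G w))
    (hGL2 : ∀ w, MemLp (G w) 2 μ)
    (hzero : ∀ w z, ¬ w ⊆ z → μ[G w | sigmaOfCoords X (z.biUnion C)] =ᵐ[μ] 0) (v : Finset ι) :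
    Pairwise fun w w' => cov[μ[G w | sigmaOfCoords X v], μ[G w' | sigmaOfCoords X v]; μ] = 0 := by
  intro w w' hne
  have hmean : ∀ w, w ≠ ∅ → ∫ x, μ[G w | sigmaOfCoords X v] x ∂μ = 0 := fun w hw => by
    rw [integral_condExp (sigmaOfCoords_le hX v),
      ← integral_condExp (sigmaOfCoords_le hX ((∅ : Finset κ).biUnion C)),
      integral_congr_ae (hzero w ∅ (by simpa using hw))]
    simp
  have horth : ∀ w w', ¬ w ⊆ w' →
      ∫ x, μ[G w | sigmaOfCoords X v] x * μ[G w' | sigmaOfCoords X v] x ∂μ = 0 :=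
    fun w w' h => integral_condExp_mul_condExp_eq_zero hX
      (indep_sigmaOfCoords_biUnion_sdiff hX hcover hindep w' v) (hGL2 w) (hzero w w' h)
      (hGmeas w') (hGL2 w')
  have hprod : ∫ x, μ[G w | sigmaOfCoords X v] x * μ[G w' | sigmaOfCoords X v] x ∂μ = 0 := by
    by_cases h : w ⊆ w'
    · simpa only [mul_comm] using horth w' w fun h' => hne (subset_antisymm h h')
    · exact horth w w' h
  have hmeans : (∫ x, μ[G w | sigmaOfCoords X v] x ∂μ) * ∫ x, μ[G w' | sigmaOfCoords X v] x ∂μ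
      = 0 := by
    rcases eq_or_ne w ∅ with rfl | hw
    · rw [hmean w' hne.symm, mul_zero]
    · rw [hmean w hw, zero_mul]
  rw [covariance_eq_sub ((hGL2 w).condExp one_le_two) ((hGL2 w').condExp one_le_two)]
  simp only [Pi.mul_apply, hprod, hmeans, sub_zero]

theorem variance_condExp_eq_sum_variance_condExp [Fintype κ] (hX : ∀ i, Measurable (X i))
    (hcover : ∀ i, ∃ j, i ∈ C j) (hindep : iIndep (fun j => sigmaOfCoords X (C j)) μ)
    (hGmeas : ∀ w, StronglyMeasurable[sigmaOfCoords X (w.biUnion C)] (G w))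
    (hGL2 : ∀ w, MemLp (G w) 2 μ)
    (hzero : ∀ w z, ¬ w ⊆ z → μ[G w | sigmaOfCoords X (z.biUnion C)] =ᵐ[μ] 0)
    {Y : Ω → ℝ} (hsum : Y =ᵐ[μ] fun ω => ∑ w, G w ω) (v : Finset ι) :
    Var[μ[Y | sigmaOfCoords X v]; μ] = ∑ w, Var[μ[G w | sigmaOfCoords X v]; μ] := by
  have hY : μ[Y | sigmaOfCoords X v] =ᵐ[μ] ∑ w, μ[G w | sigmaOfCoords X v] := by
    refine (condExp_congr_ae (hsum.trans (.of_eq ?_))).trans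
      (condExp_finsetSum (fun w _ => (hGL2 w).integrable one_le_two) _)
    ext ω
    simp
  rw [variance_congr hY, variance_sum_of_pairwise_covariance_eq_zero
    (fun w => (hGL2 w).condExp one_le_two)
    (pairwise_covariance_condExp_hoeffding_eq_zero hX hcover hindep hGmeas hGL2 hzero v)]

end Hoeffding

theorem sobol_indices_decomposition_general
    {Ω : Type*} [MeasurableSpace Ω] (μ : Measure Ω) [IsProbabilityMeasure μ]
    {p k : ℕ} {E : Fin p → Type*} [∀ i, MeasurableSpace (E i)]
    (X : ∀ i, Ω → E i) (hX : ∀ i, Measurable (X i))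
    (C : Fin k → Finset (Fin p))
    (hpart : ∀ i : Fin p, ∃! j : Fin k, i ∈ C j)
    (hindep : iIndep
      (fun j : Fin k => ⨆ i ∈ C j, MeasurableSpace.comap (X i) inferInstance) μ)
    (Y : Ω → ℝ)
    (G : Finset (Fin k) → Ω → ℝ)
    (hGmeas : ∀ w : Finset (Fin k),
      StronglyMeasurable[⨆ i ∈ w.biUnion C, MeasurableSpace.comap (X i) inferInstance]
        (G w))
    (hGL2 : ∀ w : Finset (Fin k), MemLp (G w) 2 μ)
    (hsum : Y =ᵐ[μ] fun ω => ∑ w : Finset (Fin k), G w ω)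
    (hzero : ∀ w z : Finset (Fin k), ¬ w ⊆ z →
      μ[G w | ⨆ i ∈ z.biUnion C, MeasurableSpace.comap (X i) inferInstance] =ᵐ[μ] 0)
    (u : Finset (Fin p)) :
    ∑ v ∈ u.powerset, (-1 : ℝ) ^ (u.card - v.card) *
        variance (μ[Y | ⨆ i ∈ v, MeasurableSpace.comap (X i) inferInstance]) μ
      = ∑ w ∈ Finset.univ.filter (fun w : Finset (Fin k) => u ⊆ w.biUnion C),
          ∑ v ∈ u.powerset, (-1 : ℝ) ^ (u.card - v.card) *
            variance (μ[G w | ⨆ i ∈ v, MeasurableSpace.comap (X i) inferInstance]) μ := by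
  have hcover : ∀ i, ∃ j, i ∈ C j := fun i => (hpart i).exists
  have hlocal : ∀ w v, μ[G w | sigmaOfCoords X v] =ᵐ[μ]
      μ[G w | sigmaOfCoords X (v ∩ w.biUnion C)] := fun w v =>
    condExp_sigmaOfCoords_ae_eq_inter hX (indep_sigmaOfCoords_biUnion_sdiff hX hcover hindep w v)
      (hGmeas w) ((hGL2 w).integrable one_le_two)
  have hvanish : ∀ w, ¬ u ⊆ w.biUnion C → ∑ v ∈ u.powerset,
      (-1 : ℝ) ^ (u.card - v.card) * Var[μ[G w | sigmaOfCoords X v]; μ] = 0 := by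
    intro w hw
    obtain ⟨i, hiu, hiC⟩ := Finset.not_subset.mp hw
    refine Finset.sum_powerset_neg_one_pow_card_sub_mul_eq_zero hiu fun v => variance_congr ?_
    refine (hlocal w _).trans ?_
    rw [Finset.insert_inter_of_notMem hiC]
    exact (hlocal w v).symm
  calc _ = ∑ v ∈ u.powerset, ∑ w, (-1 : ℝ) ^ (u.card - v.card) *
          Var[μ[G w | sigmaOfCoords X v]; μ] := by
        simp only [variance_condExp_eq_sum_variance_condExp hX hcover hindep hGmeas hGL2 hzero hsum,
          Finset.mul_sum]
    _ = ∑ w, ∑ v ∈ u.powerset, (-1 : ℝ) ^ (u.card - v.card) *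
          Var[μ[G w | sigmaOfCoords X v]; μ] := Finset.sum_comm
    _ = _ := (Finset.sum_filter_of_ne fun w _ h => not_not.mp (mt (hvanish w) h)).symm

/-- Proposition 2: Under the Hoeffding decomposition with independent
groups, for every `u ⊆ [1:p]` the Sobol index of `Y` satisfies
`S_u = ∑_{w⊆[1:k], u⊆C_w} S_w^g · S_u^{g,w}`; equivalently (clearing the common
denominator `Var(Y)` and the factors `Var(g_w(A_w))`),
`∑_{v⊆u} (-1)^{|u|-|v|} Var(E(Y|X_v))
  = ∑_{w⊆[1:k], u⊆C_w} ∑_{v⊆u} (-1)^{|u|-|v|} Var(E(g_w(A_w)|X_v))`. -/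
theorem sobol_indices_decomposition
    {Ω : Type*} [MeasurableSpace Ω] (μ : Measure Ω) [IsProbabilityMeasure μ]
    {p k : ℕ} {E : Fin p → Type*} [∀ i, MeasurableSpace (E i)]
    (X : ∀ i, Ω → E i) (hX : ∀ i, Measurable (X i))
    (C : Fin k → Finset (Fin p))
    (hpart : ∀ i : Fin p, ∃! j : Fin k, i ∈ C j)
    (hindep : iIndep
      (fun j : Fin k => ⨆ i ∈ C j, MeasurableSpace.comap (X i) inferInstance) μ)
    (Y : Ω → ℝ) (hY : MemLp Y 2 μ) (hVarY : variance Y μ ≠ 0)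
    (G : Finset (Fin k) → Ω → ℝ)
    (hGmeas : ∀ w : Finset (Fin k),
      StronglyMeasurable[⨆ i ∈ w.biUnion C, MeasurableSpace.comap (X i) inferInstance]
        (G w))
    (hGL2 : ∀ w : Finset (Fin k), MemLp (G w) 2 μ)
    (hsum : Y =ᵐ[μ] fun ω => ∑ w : Finset (Fin k), G w ω)
    (hzero : ∀ w z : Finset (Fin k), ¬ w ⊆ z →
      μ[G w | ⨆ i ∈ z.biUnion C, MeasurableSpace.comap (X i) inferInstance] =ᵐ[μ] 0)
    (u : Finset (Fin p)) :
    ∑ v ∈ u.powerset, (-1 : ℝ) ^ (u.card - v.card) *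
        variance (μ[Y | ⨆ i ∈ v, MeasurableSpace.comap (X i) inferInstance]) μ
      = ∑ w ∈ Finset.univ.filter (fun w : Finset (Fin k) => u ⊆ w.biUnion C),
          ∑ v ∈ u.powerset, (-1 : ℝ) ^ (u.card - v.card) *
            variance (μ[G w | ⨆ i ∈ v, MeasurableSpace.comap (X i) inferInstance]) μ :=
  sobol_indices_decomposition_general μ X hX C hpart hindep Y G hGmeas hGL2 hsum hzero u
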